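/- Let A and A' be real n×n matrices for which there exist constants C ≥ 1 and ρ ∈ (0,1) such that ‖A^k‖_F ≤ C ρ^k and ‖(A')^k‖_F ≤ C ρ^k for all k ≥ 0, and let Q be a real n×n matrix. Define Σ := ∑_{k=0}^∞ A^k Q (Aᵀ)^k and Σ' := ∑_{k=0}^∞ (A')^k Q ((A')ᵀ)^k, and set Q̃ := (A'−A) Σ' Aᵀ + A Σ' (A'−A)ᵀ + (A'−A) Σ' (A'−A)ᵀ. Then Σ' − Σ = ∑_{k=0}^∞ A^k Q̃ (Aᵀ)^k; equivalently, Σ' − Σ = A (Σ' − Σ) Aᵀ + Q̃. -/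

import Mathlib

open Matrix MeasureTheory ProbabilityTheory Filter

/-- Frobenius norm of a real matrix. -/
noncomputable def frob {α β : Type*} [Fintype α] [Fintype β] (A : Matrix α β ℝ) : ℝ :=
  Real.sqrt (∑ i, ∑ j, (A i j) ^ 2)

/-- Spectral norm (largest singular value) of a real matrix. -/
noncomputable def spec {α β : Type*} [Fintype α] [Fintype β] [DecidableEq β]
    (A : Matrix α β ℝ) : ℝ :=
  ‖LinearMap.toContinuousLinearMap (Matrix.toEuclideanLin A)‖

/-- The positive semidefinite square root of a positive semidefinite real matrix
(junk value `0` if the matrix is not positive semidefinite). -/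
noncomputable def msqrt {α : Type*} [Fintype α] [DecidableEq α]
    (M : Matrix α α ℝ) : Matrix α α ℝ :=
  open scoped Classical in
  if h : M.PosSemidef then
    (h.1.eigenvectorUnitary : Matrix α α ℝ) *
      diagonal ((RCLike.ofReal : ℝ → ℝ) ∘ Real.sqrt ∘ h.1.eigenvalues) *
      (star h.1.eigenvectorUnitary : Matrix α α ℝ)
  else 0

/-- Euclidean norm of a real vector. -/
noncomputable def vnorm {α : Type*} [Fintype α] (v : α → ℝ) : ℝ :=
  Real.sqrt (∑ i, (v i) ^ 2)

/-!
Shifting the series by one index shows that `Σ` and `Σ'` solve the Stein equations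
`Σ = A Σ Aᵀ + Q` and `Σ' = A' Σ' A'ᵀ + Q`. Since `Q̃ = A' Σ' A'ᵀ - A Σ' Aᵀ`, subtracting them is
exactly the Stein equation `Σ' - Σ = A (Σ' - Σ) Aᵀ + Q̃`. Iterating a Stein equation `X = a X b + q`
gives `X = ∑_{k<N} aᵏ q bᵏ + aᴺ X bᴺ`, and the remainder vanishes as `N → ∞` because
`‖Aᵏ‖_F ‖(Aᵀ)ᵏ‖_F ≤ C² ρ²ᵏ`; so the solution is unique and equals the series.
-/

section Ring

variable {R : Type*} [Ring R]

theorem sub_eq_mul_sub_mul_add_of_eq_mul_mul_add {a a' b b' q s s' : R}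
    (hs : s = a * s * b + q) (hs' : s' = a' * s' * b' + q) :
    s' - s = a * (s' - s) * b +
      ((a' - a) * s' * b + a * s' * (b' - b) + (a' - a) * s' * (b' - b)) :=
  calc s' - s = (a' * s' * b' + q) - (a * s * b + q) := by rw [← hs, ← hs']
    _ = _ := by noncomm_ring

theorem eq_sum_range_add_pow_mul_mul_pow {a b q x : R} (hx : x = a * x * b + q) (N : ℕ) :
    x = ∑ k ∈ Finset.range N, a ^ k * q * b ^ k + a ^ N * x * b ^ N := by
  induction N with
  | zero => simp
  | succ N ih =>
    calc x = ∑ k ∈ Finset.range N, a ^ k * q * b ^ k + a ^ N * (a * x * b + q) * b ^ N := by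
          rwa [← hx]
      _ = _ := by rw [Finset.sum_range_succ, pow_succ a, pow_succ' b]; noncomm_ring

end Ring

section TopologicalRing

variable {R : Type*} [Ring R] [TopologicalSpace R] [IsTopologicalRing R] [T2Space R]

theorem tsum_pow_mul_mul_pow_eq {a b q : R} (hs : Summable fun k : ℕ ↦ a ^ k * q * b ^ k) :
    ∑' k : ℕ, a ^ k * q * b ^ k = a * (∑' k : ℕ, a ^ k * q * b ^ k) * b + q := by
  rw [← hs.tsum_mul_left a, ← (hs.mul_left a).tsum_mul_right b, hs.tsum_eq_zero_add, add_comm]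
  simp only [pow_zero, one_mul, mul_one, pow_succ' a, pow_succ b, mul_assoc]

theorem eq_tsum_pow_mul_mul_pow {a b q x : R} (hx : x = a * x * b + q)
    (hs : Summable fun k : ℕ ↦ a ^ k * q * b ^ k)
    (hx_pow : Tendsto (fun k : ℕ ↦ a ^ k * x * b ^ k) atTop (nhds 0)) :
    x = ∑' k : ℕ, a ^ k * q * b ^ k := by
  have hlim := hs.hasSum.tendsto_sum_nat.add hx_pow
  rw [add_zero] at hlim
  exact tendsto_nhds_unique
    (tendsto_const_nhds.congr fun N ↦ eq_sum_range_add_pow_mul_mul_pow hx N) hlim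

end TopologicalRing

theorem summable_pow_mul_mul_pow {R : Type*} [NormedRing R] [CompleteSpace R] {a b : R}
    (h : Summable fun k : ℕ ↦ ‖a ^ k‖ * ‖b ^ k‖) (q : R) :
    Summable fun k : ℕ ↦ a ^ k * q * b ^ k :=
  (h.mul_left ‖q‖).of_norm_bounded fun k ↦
    norm_mul₃_le.trans_eq (by ring)

section Frobenius

open scoped Matrix.Norms.Frobenius

variable {m n : Type*} [Fintype m] [Fintype n]

theorem frob_eq_frobenius_norm (A : Matrix m n ℝ) : frob A = ‖A‖ := by
  rw [frobenius_norm_def, frob, Real.sqrt_eq_rpow]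
  simp only [Real.norm_eq_abs, sq_abs, Real.rpow_two]

theorem summable_pow_mul_mul_transpose_pow [DecidableEq m] {A : Matrix m m ℝ} {C ρ : ℝ}
    (hρ : |ρ| < 1) (hA : ∀ k : ℕ, frob (A ^ k) ≤ C * ρ ^ k) (Q : Matrix m m ℝ) :
    Summable fun k : ℕ ↦ A ^ k * Q * Aᵀ ^ k := by
  refine summable_pow_mul_mul_pow ?_ Q
  have hgeom : Summable fun k : ℕ ↦ C ^ 2 * (ρ ^ 2) ^ k :=
    (summable_geometric_of_lt_one (sq_nonneg ρ) ((sq_lt_one_iff_abs_lt_one ρ).2 hρ)).mul_left _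
  refine hgeom.of_nonneg_of_le (fun k ↦ by positivity) fun k ↦ ?_
  rw [← transpose_pow, frobenius_norm_transpose, ← sq, ← frob_eq_frobenius_norm]
  calc frob (A ^ k) ^ 2 ≤ (C * ρ ^ k) ^ 2 := pow_le_pow_left₀ (Real.sqrt_nonneg _) (hA k) 2
    _ = C ^ 2 * (ρ ^ 2) ^ k := by ring

end Frobenius

theorem lyapunov_perturbation_identity_general {n : ℕ} (A A' Q : Matrix (Fin n) (Fin n) ℝ)
    (C ρ : ℝ) (hρ : ρ ∈ Set.Ioo (0 : ℝ) 1)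
    (hA : ∀ k : ℕ, frob (A ^ k) ≤ C * ρ ^ k)
    (hA' : ∀ k : ℕ, frob (A' ^ k) ≤ C * ρ ^ k) :
    (∑' k : ℕ, A' ^ k * Q * A'ᵀ ^ k) - (∑' k : ℕ, A ^ k * Q * Aᵀ ^ k)
      = ∑' k : ℕ, A ^ k *
          ((A' - A) * (∑' j : ℕ, A' ^ j * Q * A'ᵀ ^ j) * Aᵀ +
            A * (∑' j : ℕ, A' ^ j * Q * A'ᵀ ^ j) * (A' - A)ᵀ +
            (A' - A) * (∑' j : ℕ, A' ^ j * Q * A'ᵀ ^ j) * (A' - A)ᵀ) * Aᵀ ^ k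
    ∧ (∑' k : ℕ, A' ^ k * Q * A'ᵀ ^ k) - (∑' k : ℕ, A ^ k * Q * Aᵀ ^ k)
      = A * ((∑' k : ℕ, A' ^ k * Q * A'ᵀ ^ k) - (∑' k : ℕ, A ^ k * Q * Aᵀ ^ k)) * Aᵀ +
          ((A' - A) * (∑' j : ℕ, A' ^ j * Q * A'ᵀ ^ j) * Aᵀ +
            A * (∑' j : ℕ, A' ^ j * Q * A'ᵀ ^ j) * (A' - A)ᵀ +
            (A' - A) * (∑' j : ℕ, A' ^ j * Q * A'ᵀ ^ j) * (A' - A)ᵀ) := by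
  have hρ_abs : |ρ| < 1 := abs_lt.2 ⟨by linarith [hρ.1], hρ.2⟩
  have hsA := summable_pow_mul_mul_transpose_pow hρ_abs hA
  have hsA' := summable_pow_mul_mul_transpose_pow hρ_abs hA'
  have stein := sub_eq_mul_sub_mul_add_of_eq_mul_mul_add
    (tsum_pow_mul_mul_pow_eq (hsA Q)) (tsum_pow_mul_mul_pow_eq (hsA' Q))
  rw [← transpose_sub] at stein
  exact ⟨eq_tsum_pow_mul_mul_pow stein (hsA _) (hsA _).tendsto_atTop_zero, stein⟩

theorem lyapunov_perturbation_identity {n : ℕ} (A A' Q : Matrix (Fin n) (Fin n) ℝ)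
    (C ρ : ℝ) (hC : 1 ≤ C) (hρ : ρ ∈ Set.Ioo (0 : ℝ) 1)
    (hA : ∀ k : ℕ, frob (A ^ k) ≤ C * ρ ^ k)
    (hA' : ∀ k : ℕ, frob (A' ^ k) ≤ C * ρ ^ k) :
    (∑' k : ℕ, A' ^ k * Q * A'ᵀ ^ k) - (∑' k : ℕ, A ^ k * Q * Aᵀ ^ k)
      = ∑' k : ℕ, A ^ k *
          ((A' - A) * (∑' j : ℕ, A' ^ j * Q * A'ᵀ ^ j) * Aᵀ +
            A * (∑' j : ℕ, A' ^ j * Q * A'ᵀ ^ j) * (A' - A)ᵀ +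
            (A' - A) * (∑' j : ℕ, A' ^ j * Q * A'ᵀ ^ j) * (A' - A)ᵀ) * Aᵀ ^ k
    ∧ (∑' k : ℕ, A' ^ k * Q * A'ᵀ ^ k) - (∑' k : ℕ, A ^ k * Q * Aᵀ ^ k)
      = A * ((∑' k : ℕ, A' ^ k * Q * A'ᵀ ^ k) - (∑' k : ℕ, A ^ k * Q * Aᵀ ^ k)) * Aᵀ +
          ((A' - A) * (∑' j : ℕ, A' ^ j * Q * A'ᵀ ^ j) * Aᵀ +
            A * (∑' j : ℕ, A' ^ j * Q * A'ᵀ ^ j) * (A' - A)ᵀ +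
            (A' - A) * (∑' j : ℕ, A' ^ j * Q * A'ᵀ ^ j) * (A' - A)ᵀ) :=
  lyapunov_perturbation_identity_general A A' Q C ρ hρ hA hA'
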